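/- Fix a positive integer R, let Ω := {0,1,2,*}, and let 𝒟 be the directed graph with vertex set {s,t} ∪ {v^α_x : α ∈ {a,b,c,d}, x ∈ Ω^R} and the following arcs: for every x ∈ Ω^R, arcs (s, v^c_x), (v^a_x, s), (s, v^a_x), (v^d_x, t), (t, v^d_x), (t, v^b_x); and for every ordered pair (α,β) ∈ {(c,a),(a,b),(b,c),(c,b),(d,c),(b,d)} and x,y ∈ Ω^R, an arc from v^α_x to v^β_y if and only if for every coordinate 1 ≤ j ≤ R one has y_j = (x_j + 1) mod 3 or y_j = * or x_j = *. Then for every q ∈ [R], after deleting the vertex set V_q := {v^α_x : α ∈ {a,b,c,d}, x_q = * or x_q = 0}, no vertex of 𝒟 has directed paths to both s and t. -/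

import Mathlib

/-- The labels of the internal vertex groups of the dictatorship test graph. -/
inductive ABCD : Type
  | a | b | c | d
  deriving DecidableEq

/-- The coordinatewise compatibility condition: `v = u + 1 (mod 3)`, or one of the
two coordinates is `* = none`. -/
def nextOk3 (u v : Option (Fin 3)) : Prop :=
  u = none ∨ v = none ∨ ∃ k : Fin 3, u = some k ∧ v = some (k + 1)

/-- The vertices of the dictatorship test graph `𝒟^global_{R,ε}`:
`Sum.inl (α, x)` is `v^α_x`, `Sum.inr false = s`, `Sum.inr true = t`. -/
abbrev W14 (R : ℕ) : Type := (ABCD × (Fin R → Option (Fin 3))) ⊕ Bool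

/-- The arcs of the dictatorship test graph. -/
def dArc14 (R : ℕ) : W14 R → W14 R → Prop := fun u v =>
  match u, v with
  | Sum.inl (α, x), Sum.inl (β, y) =>
      ((α, β) = (ABCD.c, ABCD.a) ∨ (α, β) = (ABCD.a, ABCD.b) ∨
       (α, β) = (ABCD.b, ABCD.c) ∨ (α, β) = (ABCD.c, ABCD.b) ∨
       (α, β) = (ABCD.d, ABCD.c) ∨ (α, β) = (ABCD.b, ABCD.d)) ∧
      ∀ j : Fin R, nextOk3 (x j) (y j)
  | Sum.inr false, Sum.inl (α, _) => α = ABCD.c ∨ α = ABCD.a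
  | Sum.inl (α, _), Sum.inr false => α = ABCD.a
  | Sum.inr true, Sum.inl (α, _) => α = ABCD.d ∨ α = ABCD.b
  | Sum.inl (α, _), Sum.inr true => α = ABCD.d
  | _, _ => False

/-!
A surviving vertex `v^α_x` has `x_q ∈ {1, 2}`, and the `q`-th coordinate of an arc between
survivors must go from `1` to `2`. Hence, after deleting `V_q`, every vertex that reaches `s`
is `s`, an `a`-vertex or a `c`-vertex with `x_q = 1`, and every vertex that reaches `t` is `t`,
a `d`-vertex or a `b`-vertex with `x_q = 1`: both classes are closed under predecessors, and
they are disjoint.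
-/

namespace DictatorshipTest

def removedSet (R : ℕ) (q : Fin R) : Set (W14 R) :=
  {w | ∃ α x, w = Sum.inl (α, x) ∧ (x q = none ∨ x q = some 0)}

variable {R : ℕ}

lemma coord_of_not_mem_removedSet {q : Fin R} {α : ABCD} {x : Fin R → Option (Fin 3)}
    (h : Sum.inl (α, x) ∉ removedSet R q) : x q = some 1 ∨ x q = some 2 := by
  have hx : ¬ (x q = none ∨ x q = some 0) := fun hx => h ⟨α, x, rfl, hx⟩
  rcases hxq : x q with _ | k
  · simp_all
  · fin_cases k <;> simp_all

lemma nextOk3_eq_one_two {u v : Option (Fin 3)} (hu : u = some 1 ∨ u = some 2)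
    (hv : v = some 1 ∨ v = some 2) (h : nextOk3 u v) : u = some 1 ∧ v = some 2 := by
  rcases hu with rfl | rfl <;> rcases hv with rfl | rfl <;> revert h <;> unfold nextOk3 <;> decide

lemma coord_of_dArc14 {q : Fin R} {α β : ABCD} {x y : Fin R → Option (Fin 3)}
    (harc : dArc14 R (Sum.inl (α, x)) (Sum.inl (β, y)))
    (hx : Sum.inl (α, x) ∉ removedSet R q) (hy : Sum.inl (β, y) ∉ removedSet R q) :
    x q = some 1 ∧ y q = some 2 :=
  nextOk3_eq_one_two (coord_of_not_mem_removedSet hx) (coord_of_not_mem_removedSet hy) (harc.2 q)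

def LeadsToS (q : Fin R) : W14 R → Prop
  | Sum.inr b => b = false
  | Sum.inl (α, x) => α = ABCD.a ∨ (α = ABCD.c ∧ x q = some 1)

def LeadsToT (q : Fin R) : W14 R → Prop
  | Sum.inr b => b = true
  | Sum.inl (α, x) => α = ABCD.d ∨ (α = ABCD.b ∧ x q = some 1)

lemma not_leadsToS_and_leadsToT (q : Fin R) (w : W14 R) : ¬ (LeadsToS q w ∧ LeadsToT q w) := by
  rcases w with ⟨_ | _ | _ | _, x⟩ | _ <;> simp [LeadsToS, LeadsToT]

lemma leadsToS_of_dArc14 {q : Fin R} {u v : W14 R} (harc : dArc14 R u v)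
    (hu : u ∉ removedSet R q) (hv : v ∉ removedSet R q) (h : LeadsToS q v) : LeadsToS q u := by
  rcases u with ⟨α, x⟩ | _ | _ <;> rcases v with ⟨β, y⟩ | _ | _
  · obtain ⟨hx, hy⟩ := coord_of_dArc14 harc hu hv
    cases α <;> cases β <;> simp_all [LeadsToS, dArc14]
  all_goals try cases β
  all_goals simp_all [LeadsToS, dArc14]

lemma leadsToT_of_dArc14 {q : Fin R} {u v : W14 R} (harc : dArc14 R u v)
    (hu : u ∉ removedSet R q) (hv : v ∉ removedSet R q) (h : LeadsToT q v) : LeadsToT q u := by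
  rcases u with ⟨α, x⟩ | _ | _ <;> rcases v with ⟨β, y⟩ | _ | _
  · obtain ⟨hx, hy⟩ := coord_of_dArc14 harc hu hv
    cases α <;> cases β <;> simp_all [LeadsToT, dArc14]
  all_goals try cases β
  all_goals simp_all [LeadsToT, dArc14]

lemma leadsToS_of_reflTransGen {q : Fin R} {w : W14 R}
    (h : Relation.ReflTransGen
      (fun x y => dArc14 R x y ∧ x ∉ removedSet R q ∧ y ∉ removedSet R q) w (Sum.inr false)) :
    LeadsToS q w := by
  induction h using Relation.ReflTransGen.head_induction_on with
  | refl => rfl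
  | head harc _ ih => exact leadsToS_of_dArc14 harc.1 harc.2.1 harc.2.2 ih

lemma leadsToT_of_reflTransGen {q : Fin R} {w : W14 R}
    (h : Relation.ReflTransGen
      (fun x y => dArc14 R x y ∧ x ∉ removedSet R q ∧ y ∉ removedSet R q) w (Sum.inr true)) :
    LeadsToT q w := by
  induction h using Relation.ReflTransGen.head_induction_on with
  | refl => rfl
  | head harc _ ih => exact leadsToT_of_dArc14 harc.1 harc.2.1 harc.2.2 ih

end DictatorshipTest

/-- completeness of the dictatorship test for NodeDoubleCut: after
removing `V_q = {v^α_x : x_q = * or 0}`, no vertex has directed paths to both `s`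
and `t`. -/
theorem stmt_14 (R : ℕ) (q : Fin R) (Vq : Set (W14 R))
    (hVq : Vq = {w | ∃ α x, w = Sum.inl (α, x) ∧ (x q = none ∨ x q = some 0)}) :
    ∀ w : W14 R, w ∉ Vq →
      ¬ (Relation.ReflTransGen
            (fun x y => dArc14 R x y ∧ x ∉ Vq ∧ y ∉ Vq) w (Sum.inr false) ∧
         Relation.ReflTransGen
            (fun x y => dArc14 R x y ∧ x ∉ Vq ∧ y ∉ Vq) w (Sum.inr true)) := by
  subst hVq
  rintro w - ⟨hs, ht⟩
  exact DictatorshipTest.not_leadsToS_and_leadsToT q w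
    ⟨DictatorshipTest.leadsToS_of_reflTransGen hs, DictatorshipTest.leadsToT_of_reflTransGen ht⟩
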